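/- arXiv:2212.12934 — 5 statements merged into one kernel-verified Lean document; each statement's English description precedes it below -/
import Mathlib

section
/- The set 𝔩 = span{c⊗σz, d⊗I, i·z_n : c,d ∈ su(2^{n-1})} is a Lie subalgebra of su(2^n), i.e. it is closed under the commutator bracket. -/
open Matrix Complex
open scoped Kronecker

/-- The 2×2 Pauli matrices. -/
noncomputable def σx : Matrix (Fin 2) (Fin 2) ℂ := !![0, 1; 1, 0]
noncomputable def σy : Matrix (Fin 2) (Fin 2) ℂ := !![0, -I; I, 0]
noncomputable def σz : Matrix (Fin 2) (Fin 2) ℂ := !![1, 0; 0, -1]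

/-- `su ι`: traceless skew-Hermitian complex matrices indexed by `ι`. -/
def su (ι : Type*) [Fintype ι] [DecidableEq ι] : Set (Matrix ι ι ℂ) :=
  {A | Aᴴ = -A ∧ A.trace = 0}

/-!
Every generator of 𝔩 has the form `a ⊗ p` with `a` skew-Hermitian and `p ∈ {1, σz}` (the third
one is `(i • 1) ⊗ σz`). Since `1` and `σz` commute and `σz² = 1`, the bracket of two such
generators is `[a, b] ⊗ pq` with `pq ∈ {1, σz}`, and a commutator of skew-Hermitian matrices is
traceless, so it is again a generator. Bilinearity extends closure from generators to their span.
-/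

theorem Submodule.mul_sub_mul_mem_span {R A : Type*} [CommSemiring R] [Ring A] [Algebra R A]
    {s : Set A} (hs : ∀ a ∈ s, ∀ b ∈ s, a * b - b * a ∈ span R s) {x y : A}
    (hx : x ∈ span R s) (hy : y ∈ span R s) : x * y - y * x ∈ span R s := by
  let bracket : A →ₗ[R] A →ₗ[R] A := LinearMap.mul R A - (LinearMap.mul R A).flip
  have hle : map₂ bracket (span R s) (span R s) ≤ span R s := by
    rw [map₂_span_span, span_le]
    rintro _ ⟨a, ha, b, hb, rfl⟩
    exact hs a ha b hb
  exact hle (apply_mem_map₂ bracket hx hy)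

theorem Matrix.sub_kronecker {α l m n p : Type*} [NonUnitalNonAssocRing α]
    (A₁ A₂ : Matrix l m α) (B : Matrix n p α) : (A₁ - A₂) ⊗ₖ B = A₁ ⊗ₖ B - A₂ ⊗ₖ B := by
  ext
  simp [sub_mul]

theorem Matrix.neg_kronecker {α l m n p : Type*} [NonUnitalNonAssocRing α]
    (A : Matrix l m α) (B : Matrix n p α) : (-A) ⊗ₖ B = -(A ⊗ₖ B) := by
  ext
  simp

theorem Matrix.kronecker_mul_sub_mul_of_commute {R l n : Type*} [CommRing R] [Fintype l]
    [Fintype n] (a b : Matrix l l R) {p q : Matrix n n R} (h : Commute p q) :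
    a ⊗ₖ p * b ⊗ₖ q - b ⊗ₖ q * a ⊗ₖ p = (a * b - b * a) ⊗ₖ (p * q) := by
  rw [← mul_kronecker_mul, ← mul_kronecker_mul, h.eq, sub_kronecker]

theorem σz_mul_σz : σz * σz = 1 := by
  ext i j
  fin_cases i <;> fin_cases j <;> simp [σz, mul_apply, Fin.sum_univ_succ, one_apply]

theorem σz_conjTranspose : σzᴴ = σz := by
  ext i j
  fin_cases i <;> fin_cases j <;> simp [σz]

theorem trace_σz : σz.trace = 0 := by
  simp [σz, trace_fin_two]

section su

variable {ι : Type*} [Fintype ι] [DecidableEq ι]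

variable (ι) in
def suSubmodule : Submodule ℝ (Matrix ι ι ℂ) where
  carrier := su ι
  add_mem' := by
    rintro A B ⟨hA, trA⟩ ⟨hB, trB⟩
    exact ⟨by rw [conjTranspose_add, hA, hB, neg_add], by rw [trace_add, trA, trB, add_zero]⟩
  zero_mem' := ⟨by simp, by simp⟩
  smul_mem' := by
    rintro r A ⟨hA, trA⟩
    exact ⟨by simp [hA], by simp [trA]⟩

theorem commutator_mem_su {A B : Matrix ι ι ℂ} (hA : Aᴴ = -A) (hB : Bᴴ = -B) :
    A * B - B * A ∈ su ι :=
  ⟨by simp [conjTranspose_mul, hA, hB], by rw [trace_sub, trace_mul_comm, sub_self]⟩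

theorem kronecker_mem_su {κ : Type*} [Fintype κ] [DecidableEq κ] {a : Matrix ι ι ℂ}
    {p : Matrix κ κ ℂ} (ha : aᴴ = -a) (hp : pᴴ = p) (htr : a.trace = 0 ∨ p.trace = 0) :
    a ⊗ₖ p ∈ su (ι × κ) := by
  refine ⟨by rw [conjTranspose_kronecker, ha, hp, neg_kronecker], ?_⟩
  rw [trace_kronecker]
  exact mul_eq_zero.2 htr

variable (ι) in
def lGenerators : Set (Matrix (ι × Fin 2) (ι × Fin 2) ℂ) :=
  {M | (∃ c ∈ su ι, M = c ⊗ₖ σz) ∨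
       (∃ d ∈ su ι, M = d ⊗ₖ (1 : Matrix (Fin 2) (Fin 2) ℂ)) ∨
       M = Complex.I • ((1 : Matrix ι ι ℂ) ⊗ₖ σz)}

theorem lGenerators_subset_su : lGenerators ι ⊆ su (ι × Fin 2) := by
  rintro M (⟨c, ⟨hc, trc⟩, rfl⟩ | ⟨d, ⟨hd, trd⟩, rfl⟩ | rfl)
  · exact kronecker_mem_su hc σz_conjTranspose (.inl trc)
  · exact kronecker_mem_su hd conjTranspose_one (.inl trd)
  · rw [← smul_kronecker]
    exact kronecker_mem_su (by simp) σz_conjTranspose (.inr trace_σz)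

theorem kronecker_mem_lGenerators {a : Matrix ι ι ℂ} (ha : a ∈ su ι)
    {p : Matrix (Fin 2) (Fin 2) ℂ} (hp : p = 1 ∨ p = σz) : a ⊗ₖ p ∈ lGenerators ι := by
  rcases hp with rfl | rfl
  exacts [.inr (.inl ⟨a, ha, rfl⟩), .inl ⟨a, ha, rfl⟩]

theorem exists_eq_kronecker_of_mem_lGenerators {M : Matrix (ι × Fin 2) (ι × Fin 2) ℂ}
    (hM : M ∈ lGenerators ι) :
    ∃ a : Matrix ι ι ℂ, aᴴ = -a ∧ ∃ p, (p = 1 ∨ p = σz) ∧ M = a ⊗ₖ p := by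
  rcases hM with ⟨c, ⟨hc, -⟩, rfl⟩ | ⟨d, ⟨hd, -⟩, rfl⟩ | rfl
  · exact ⟨c, hc, σz, .inr rfl, rfl⟩
  · exact ⟨d, hd, 1, .inl rfl, rfl⟩
  · exact ⟨Complex.I • 1, by simp, σz, .inr rfl, (smul_kronecker _ _ _).symm⟩

theorem commutator_mem_lGenerators {A B : Matrix (ι × Fin 2) (ι × Fin 2) ℂ}
    (hA : A ∈ lGenerators ι) (hB : B ∈ lGenerators ι) : A * B - B * A ∈ lGenerators ι := by
  obtain ⟨a, ha, p, hp, rfl⟩ := exists_eq_kronecker_of_mem_lGenerators hA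
  obtain ⟨b, hb, q, hq, rfl⟩ := exists_eq_kronecker_of_mem_lGenerators hB
  have hpq : Commute p q := by
    rcases hp with rfl | rfl
    · exact Commute.one_left q
    · rcases hq with rfl | rfl
      exacts [Commute.one_right σz, Commute.refl σz]
  rw [kronecker_mul_sub_mul_of_commute a b hpq]
  refine kronecker_mem_lGenerators (commutator_mem_su ha hb) ?_
  rcases hp with rfl | rfl <;> rcases hq with rfl | rfl <;> simp [σz_mul_σz]

end su

/-- The subalgebra 𝔩 = span_ℝ {c ⊗ σz, d ⊗ I, i·z_n : c, d ∈ su(2^{n-1})}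
of su(2^n) is closed under the commutator bracket.  Here `n = m + 1` and
the `2^n`-dimensional space is indexed by `Fin (2^m) × Fin 2`. -/
theorem stmt0 (m : ℕ)
    (l : Submodule ℝ (Matrix (Fin (2 ^ m) × Fin 2) (Fin (2 ^ m) × Fin 2) ℂ))
    (hl : l = Submodule.span ℝ
      {M | (∃ c ∈ su (Fin (2 ^ m)), M = c ⊗ₖ σz) ∨
           (∃ d ∈ su (Fin (2 ^ m)), M = d ⊗ₖ (1 : Matrix (Fin 2) (Fin 2) ℂ)) ∨
           M = Complex.I • ((1 : Matrix (Fin (2 ^ m)) (Fin (2 ^ m)) ℂ) ⊗ₖ σz)}) :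
    (↑l : Set _) ⊆ su (Fin (2 ^ m) × Fin 2) ∧
    ∀ A ∈ l, ∀ B ∈ l, A * B - B * A ∈ l := by
  change l = Submodule.span ℝ (lGenerators (Fin (2 ^ m))) at hl
  subst hl
  refine ⟨(Submodule.span_le (p := suSubmodule _)).2 lGenerators_subset_su, ?_⟩
  intro A hA B hB
  exact Submodule.mul_sub_mul_mem_span
    (fun a ha b hb => Submodule.subset_span (commutator_mem_lGenerators ha hb)) hA hB
end

section
/- With 𝔪 and 𝔩 as in the Khaneja–Glaser splitting of su(2^n), the commutator satisfies [𝔪,𝔩] ⊆ 𝔪. -/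
open Matrix Complex
open scoped Kronecker

private lemma pxz : σx * σz = (-I : ℂ) • σy := by
  simp [σx, σy, σz, Matrix.mul_fin_two]
private lemma pzx : σz * σx = (I : ℂ) • σy := by
  simp [σx, σy, σz, Matrix.mul_fin_two]
private lemma pyz : σy * σz = (I : ℂ) • σx := by
  simp [σx, σy, σz, Matrix.mul_fin_two]
private lemma pzy : σz * σy = (-I : ℂ) • σx := by
  simp [σx, σy, σz, Matrix.mul_fin_two]

private lemma sub_kron {l n : Type*} [Fintype l] [Fintype n] [DecidableEq l] [DecidableEq n]
    (A B : Matrix l l ℂ) (C : Matrix n n ℂ) : (A - B) ⊗ₖ C = A ⊗ₖ C - B ⊗ₖ C := by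
  ext i j
  simp [Matrix.kroneckerMap_apply, Matrix.sub_apply, sub_mul]

private lemma su_comm {ι : Type*} [Fintype ι] [DecidableEq ι]
    {a d : Matrix ι ι ℂ} (ha : a ∈ su ι) (hd : d ∈ su ι) :
    a * d - d * a ∈ su ι := by
  obtain ⟨ha1, _⟩ := ha
  obtain ⟨hd1, _⟩ := hd
  constructor
  · simp [Matrix.conjTranspose_sub, Matrix.conjTranspose_mul, ha1, hd1]
  · simp [Matrix.trace_sub, Matrix.trace_mul_comm a d]

private lemma su_anti (m : ℕ) {a c : Matrix (Fin (2 ^ m)) (Fin (2 ^ m)) ℂ}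
    (ha : a ∈ su (Fin (2 ^ m))) (hc : c ∈ su (Fin (2 ^ m))) :
    ∃ S ∈ su (Fin (2 ^ m)), ∃ s : ℝ,
      I • (a * c + c * a) = S + s • (I • (1 : Matrix (Fin (2 ^ m)) (Fin (2 ^ m)) ℂ)) := by
  obtain ⟨ha1, _⟩ := ha
  obtain ⟨hc1, _⟩ := hc
  obtain ⟨r, hr⟩ : ∃ r : ℝ, (a * c).trace = (r : ℂ) := by
    refine ⟨(a * c).trace.re, ?_⟩
    have h1 : (starRingEnd ℂ) (a * c).trace = (a * c).trace := by
      have h2 : (a * c)ᴴ.trace = (a * c).trace := by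
        rw [Matrix.conjTranspose_mul, ha1, hc1, Matrix.neg_mul, Matrix.mul_neg, neg_neg,
          Matrix.trace_mul_comm]
      rw [Matrix.trace_conjTranspose] at h2
      exact h2
    exact (Complex.conj_eq_iff_re.mp h1).symm
  set s : ℝ := 2 * r / 2 ^ m with hs
  refine ⟨I • (a * c + c * a) - s • (I • (1 : Matrix (Fin (2 ^ m)) (Fin (2 ^ m)) ℂ)), ⟨?_, ?_⟩, s,
    (sub_add_cancel _ _).symm⟩
  · have hH : (a * c + c * a)ᴴ = a * c + c * a := by
      rw [Matrix.conjTranspose_add, Matrix.conjTranspose_mul, Matrix.conjTranspose_mul, ha1, hc1]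
      simp [add_comm]
    rw [Matrix.conjTranspose_sub, Matrix.conjTranspose_smul, Matrix.conjTranspose_smul,
      Matrix.conjTranspose_smul, hH, Matrix.conjTranspose_one]
    simp only [Complex.star_def, Complex.conj_I, star_trivial]
    module
  · have h2 : ((2 : ℂ)) ^ m ≠ 0 := pow_ne_zero _ two_ne_zero
    rw [Matrix.trace_sub, Matrix.trace_smul, Matrix.trace_smul, Matrix.trace_smul,
      Matrix.trace_add, Matrix.trace_one, Matrix.trace_mul_comm c a, hr]
    simp only [smul_eq_mul, Complex.real_smul, hs, Fintype.card_fin]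
    push_cast
    field_simp
    ring

/-- With 𝔪 and 𝔩 as in the Khaneja–Glaser splitting of su(2^n),
[𝔪, 𝔩] ⊆ 𝔪.  Here n = m + 1. -/
theorem stmt2 (m : ℕ)
    (mfr lfr : Submodule ℝ (Matrix (Fin (2 ^ m) × Fin 2) (Fin (2 ^ m) × Fin 2) ℂ))
    (hm : mfr = Submodule.span ℝ
      {M | (∃ a ∈ su (Fin (2 ^ m)), M = a ⊗ₖ σx) ∨
           (∃ b ∈ su (Fin (2 ^ m)), M = b ⊗ₖ σy) ∨
           M = Complex.I • ((1 : Matrix (Fin (2 ^ m)) (Fin (2 ^ m)) ℂ) ⊗ₖ σx) ∨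
           M = Complex.I • ((1 : Matrix (Fin (2 ^ m)) (Fin (2 ^ m)) ℂ) ⊗ₖ σy)})
    (hl : lfr = Submodule.span ℝ
      {M | (∃ c ∈ su (Fin (2 ^ m)), M = c ⊗ₖ σz) ∨
           (∃ d ∈ su (Fin (2 ^ m)), M = d ⊗ₖ (1 : Matrix (Fin 2) (Fin 2) ℂ)) ∨
           M = Complex.I • ((1 : Matrix (Fin (2 ^ m)) (Fin (2 ^ m)) ℂ) ⊗ₖ σz)}) :
    ∀ A ∈ mfr, ∀ B ∈ lfr, A * B - B * A ∈ mfr := by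
  subst hm hl
  set Sm : Set (Matrix (Fin (2 ^ m) × Fin 2) (Fin (2 ^ m) × Fin 2) ℂ) :=
      {M | (∃ a ∈ su (Fin (2 ^ m)), M = a ⊗ₖ σx) ∨
           (∃ b ∈ su (Fin (2 ^ m)), M = b ⊗ₖ σy) ∨
           M = Complex.I • ((1 : Matrix (Fin (2 ^ m)) (Fin (2 ^ m)) ℂ) ⊗ₖ σx) ∨
           M = Complex.I • ((1 : Matrix (Fin (2 ^ m)) (Fin (2 ^ m)) ℂ) ⊗ₖ σy)} with hSm
  set Sl : Set (Matrix (Fin (2 ^ m) × Fin 2) (Fin (2 ^ m) × Fin 2) ℂ) :=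
      {M | (∃ c ∈ su (Fin (2 ^ m)), M = c ⊗ₖ σz) ∨
           (∃ d ∈ su (Fin (2 ^ m)), M = d ⊗ₖ (1 : Matrix (Fin 2) (Fin 2) ℂ)) ∨
           M = Complex.I • ((1 : Matrix (Fin (2 ^ m)) (Fin (2 ^ m)) ℂ) ⊗ₖ σz)} with hSl
  have gx : ∀ a ∈ su (Fin (2 ^ m)), a ⊗ₖ σx ∈ Submodule.span ℝ Sm :=
    fun a ha => Submodule.subset_span (Or.inl ⟨a, ha, rfl⟩)
  have gy : ∀ b ∈ su (Fin (2 ^ m)), b ⊗ₖ σy ∈ Submodule.span ℝ Sm :=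
    fun b hb => Submodule.subset_span (Or.inr (Or.inl ⟨b, hb, rfl⟩))
  have gIx : I • ((1 : Matrix (Fin (2 ^ m)) (Fin (2 ^ m)) ℂ) ⊗ₖ σx) ∈ Submodule.span ℝ Sm :=
    Submodule.subset_span (Or.inr (Or.inr (Or.inl rfl)))
  have gIy : I • ((1 : Matrix (Fin (2 ^ m)) (Fin (2 ^ m)) ℂ) ⊗ₖ σy) ∈ Submodule.span ℝ Sm :=
    Submodule.subset_span (Or.inr (Or.inr (Or.inr rfl)))
  -- the generator-generator case
  have key : ∀ A ∈ Sm, ∀ B ∈ Sl, A * B - B * A ∈ Submodule.span ℝ Sm := by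
    rintro A hA B hB
    rcases hA with ⟨a, ha, rfl⟩ | ⟨b, hb, rfl⟩ | rfl | rfl <;>
      rcases hB with ⟨c, hc, rfl⟩ | ⟨d, hd, rfl⟩ | rfl
    · -- [a⊗σx, c⊗σz]
      obtain ⟨S, hS, s, hSeq⟩ := su_anti m ha hc
      have heq : a ⊗ₖ σx * c ⊗ₖ σz - c ⊗ₖ σz * a ⊗ₖ σx
          = (-1 : ℝ) • (S ⊗ₖ σy) + (-s) • (I • ((1 : Matrix (Fin (2 ^ m)) (Fin (2 ^ m)) ℂ) ⊗ₖ σy)) := by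
        rw [← Matrix.mul_kronecker_mul, ← Matrix.mul_kronecker_mul, pxz, pzx,
          Matrix.kronecker_smul, Matrix.kronecker_smul]
        have : I • ((a * c + c * a) ⊗ₖ σy)
            = S ⊗ₖ σy + s • (I • ((1 : Matrix (Fin (2 ^ m)) (Fin (2 ^ m)) ℂ) ⊗ₖ σy)) := by
          rw [← Matrix.smul_kronecker, hSeq, Matrix.add_kronecker, Matrix.smul_kronecker,
            Matrix.smul_kronecker]
        rw [Matrix.add_kronecker] at this
        linear_combination (norm := module) -this
      rw [heq]
      exact Submodule.add_mem _ (Submodule.smul_mem _ _ (gy S hS)) (Submodule.smul_mem _ _ gIy)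
    · -- [a⊗σx, d⊗1]
      have heq : a ⊗ₖ σx * d ⊗ₖ (1 : Matrix (Fin 2) (Fin 2) ℂ)
          - d ⊗ₖ (1 : Matrix (Fin 2) (Fin 2) ℂ) * a ⊗ₖ σx = (a * d - d * a) ⊗ₖ σx := by
        rw [← Matrix.mul_kronecker_mul, ← Matrix.mul_kronecker_mul, sub_kron,
          Matrix.mul_one, Matrix.one_mul]
      rw [heq]
      exact gx _ (su_comm ha hd)
    · -- [a⊗σx, i 1⊗σz]
      have heq : a ⊗ₖ σx * I • ((1 : Matrix (Fin (2 ^ m)) (Fin (2 ^ m)) ℂ) ⊗ₖ σz)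
          - I • ((1 : Matrix (Fin (2 ^ m)) (Fin (2 ^ m)) ℂ) ⊗ₖ σz) * a ⊗ₖ σx
          = (2 : ℝ) • (a ⊗ₖ σy) := by
        rw [Matrix.mul_smul, Matrix.smul_mul, ← Matrix.mul_kronecker_mul,
          ← Matrix.mul_kronecker_mul, Matrix.mul_one, Matrix.one_mul, pxz, pzx,
          Matrix.kronecker_smul, Matrix.kronecker_smul, smul_smul, smul_smul]
        norm_num
        module
      rw [heq]
      exact Submodule.smul_mem _ _ (gy a ha)
    · -- [b⊗σy, c⊗σz]
      obtain ⟨S, hS, s, hSeq⟩ := su_anti m hb hc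
      have heq : b ⊗ₖ σy * c ⊗ₖ σz - c ⊗ₖ σz * b ⊗ₖ σy
          = S ⊗ₖ σx + s • (I • ((1 : Matrix (Fin (2 ^ m)) (Fin (2 ^ m)) ℂ) ⊗ₖ σx)) := by
        rw [← Matrix.mul_kronecker_mul, ← Matrix.mul_kronecker_mul, pyz, pzy,
          Matrix.kronecker_smul, Matrix.kronecker_smul]
        have : I • ((b * c + c * b) ⊗ₖ σx)
            = S ⊗ₖ σx + s • (I • ((1 : Matrix (Fin (2 ^ m)) (Fin (2 ^ m)) ℂ) ⊗ₖ σx)) := by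
          rw [← Matrix.smul_kronecker, hSeq, Matrix.add_kronecker, Matrix.smul_kronecker,
            Matrix.smul_kronecker]
        rw [Matrix.add_kronecker] at this
        linear_combination (norm := module) this
      rw [heq]
      exact Submodule.add_mem _ (gx S hS) (Submodule.smul_mem _ _ gIx)
    · -- [b⊗σy, d⊗1]
      have heq : b ⊗ₖ σy * d ⊗ₖ (1 : Matrix (Fin 2) (Fin 2) ℂ)
          - d ⊗ₖ (1 : Matrix (Fin 2) (Fin 2) ℂ) * b ⊗ₖ σy = (b * d - d * b) ⊗ₖ σy := by
        rw [← Matrix.mul_kronecker_mul, ← Matrix.mul_kronecker_mul, sub_kron,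
          Matrix.mul_one, Matrix.one_mul]
      rw [heq]
      exact gy _ (su_comm hb hd)
    · -- [b⊗σy, i 1⊗σz]
      have heq : b ⊗ₖ σy * I • ((1 : Matrix (Fin (2 ^ m)) (Fin (2 ^ m)) ℂ) ⊗ₖ σz)
          - I • ((1 : Matrix (Fin (2 ^ m)) (Fin (2 ^ m)) ℂ) ⊗ₖ σz) * b ⊗ₖ σy
          = (-2 : ℝ) • (b ⊗ₖ σx) := by
        rw [Matrix.mul_smul, Matrix.smul_mul, ← Matrix.mul_kronecker_mul,
          ← Matrix.mul_kronecker_mul, Matrix.mul_one, Matrix.one_mul, pyz, pzy,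
          Matrix.kronecker_smul, Matrix.kronecker_smul, smul_smul, smul_smul]
        norm_num
        module
      rw [heq]
      exact Submodule.smul_mem _ _ (gx b hb)
    · -- [i 1⊗σx, c⊗σz]
      have heq : I • ((1 : Matrix (Fin (2 ^ m)) (Fin (2 ^ m)) ℂ) ⊗ₖ σx) * c ⊗ₖ σz
          - c ⊗ₖ σz * I • ((1 : Matrix (Fin (2 ^ m)) (Fin (2 ^ m)) ℂ) ⊗ₖ σx)
          = (2 : ℝ) • (c ⊗ₖ σy) := by
        rw [Matrix.mul_smul, Matrix.smul_mul, ← Matrix.mul_kronecker_mul,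
          ← Matrix.mul_kronecker_mul, Matrix.mul_one, Matrix.one_mul, pxz, pzx,
          Matrix.kronecker_smul, Matrix.kronecker_smul, smul_smul, smul_smul]
        norm_num
        module
      rw [heq]
      exact Submodule.smul_mem _ _ (gy c hc)
    · -- [i 1⊗σx, d⊗1] = 0
      have heq : I • ((1 : Matrix (Fin (2 ^ m)) (Fin (2 ^ m)) ℂ) ⊗ₖ σx) * d ⊗ₖ (1 : Matrix (Fin 2) (Fin 2) ℂ)
          - d ⊗ₖ (1 : Matrix (Fin 2) (Fin 2) ℂ) * I • ((1 : Matrix (Fin (2 ^ m)) (Fin (2 ^ m)) ℂ) ⊗ₖ σx)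
          = 0 := by
        rw [Matrix.mul_smul, Matrix.smul_mul, ← Matrix.mul_kronecker_mul,
          ← Matrix.mul_kronecker_mul, Matrix.mul_one, Matrix.one_mul, Matrix.mul_one,
          Matrix.one_mul, sub_self]
      rw [heq]
      exact Submodule.zero_mem _
    · -- [i 1⊗σx, i 1⊗σz]
      have heq : I • ((1 : Matrix (Fin (2 ^ m)) (Fin (2 ^ m)) ℂ) ⊗ₖ σx)
            * (I • ((1 : Matrix (Fin (2 ^ m)) (Fin (2 ^ m)) ℂ) ⊗ₖ σz))
          - I • ((1 : Matrix (Fin (2 ^ m)) (Fin (2 ^ m)) ℂ) ⊗ₖ σz)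
            * (I • ((1 : Matrix (Fin (2 ^ m)) (Fin (2 ^ m)) ℂ) ⊗ₖ σx))
          = (2 : ℝ) • (I • ((1 : Matrix (Fin (2 ^ m)) (Fin (2 ^ m)) ℂ) ⊗ₖ σy)) := by
        rw [Matrix.mul_smul, Matrix.smul_mul, Matrix.mul_smul, Matrix.smul_mul,
          ← Matrix.mul_kronecker_mul, ← Matrix.mul_kronecker_mul, Matrix.mul_one, pxz, pzx,
          Matrix.kronecker_smul, Matrix.kronecker_smul]
        rw [smul_smul, smul_smul, smul_smul, smul_smul]
        norm_num
        module
      rw [heq]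
      exact Submodule.smul_mem _ _ gIy
    · -- [i 1⊗σy, c⊗σz]
      have heq : I • ((1 : Matrix (Fin (2 ^ m)) (Fin (2 ^ m)) ℂ) ⊗ₖ σy) * c ⊗ₖ σz
          - c ⊗ₖ σz * I • ((1 : Matrix (Fin (2 ^ m)) (Fin (2 ^ m)) ℂ) ⊗ₖ σy)
          = (-2 : ℝ) • (c ⊗ₖ σx) := by
        rw [Matrix.mul_smul, Matrix.smul_mul, ← Matrix.mul_kronecker_mul,
          ← Matrix.mul_kronecker_mul, Matrix.mul_one, Matrix.one_mul, pyz, pzy,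
          Matrix.kronecker_smul, Matrix.kronecker_smul, smul_smul, smul_smul]
        norm_num
        module
      rw [heq]
      exact Submodule.smul_mem _ _ (gx c hc)
    · -- [i 1⊗σy, d⊗1] = 0
      have heq : I • ((1 : Matrix (Fin (2 ^ m)) (Fin (2 ^ m)) ℂ) ⊗ₖ σy) * d ⊗ₖ (1 : Matrix (Fin 2) (Fin 2) ℂ)
          - d ⊗ₖ (1 : Matrix (Fin 2) (Fin 2) ℂ) * I • ((1 : Matrix (Fin (2 ^ m)) (Fin (2 ^ m)) ℂ) ⊗ₖ σy)
          = 0 := by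
        rw [Matrix.mul_smul, Matrix.smul_mul, ← Matrix.mul_kronecker_mul,
          ← Matrix.mul_kronecker_mul, Matrix.mul_one, Matrix.one_mul, Matrix.mul_one,
          Matrix.one_mul, sub_self]
      rw [heq]
      exact Submodule.zero_mem _
    · -- [i 1⊗σy, i 1⊗σz]
      have heq : I • ((1 : Matrix (Fin (2 ^ m)) (Fin (2 ^ m)) ℂ) ⊗ₖ σy)
            * (I • ((1 : Matrix (Fin (2 ^ m)) (Fin (2 ^ m)) ℂ) ⊗ₖ σz))
          - I • ((1 : Matrix (Fin (2 ^ m)) (Fin (2 ^ m)) ℂ) ⊗ₖ σz)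
            * (I • ((1 : Matrix (Fin (2 ^ m)) (Fin (2 ^ m)) ℂ) ⊗ₖ σy))
          = (-2 : ℝ) • (I • ((1 : Matrix (Fin (2 ^ m)) (Fin (2 ^ m)) ℂ) ⊗ₖ σx)) := by
        rw [Matrix.mul_smul, Matrix.smul_mul, Matrix.mul_smul, Matrix.smul_mul,
          ← Matrix.mul_kronecker_mul, ← Matrix.mul_kronecker_mul, Matrix.mul_one, pyz, pzy,
          Matrix.kronecker_smul, Matrix.kronecker_smul]
        rw [smul_smul, smul_smul, smul_smul, smul_smul]
        norm_num
        module
      rw [heq]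
      exact Submodule.smul_mem _ _ gIx
  -- extend to all of lfr by linearity in B
  have key2 : ∀ A ∈ Sm, ∀ B ∈ Submodule.span ℝ Sl, A * B - B * A ∈ Submodule.span ℝ Sm := by
    intro A hA B hB
    induction hB using Submodule.span_induction with
    | mem x hx => exact key A hA x hx
    | zero => simp
    | add x y hx hy ihx ihy =>
      have : A * (x + y) - (x + y) * A = (A * x - x * A) + (A * y - y * A) := by noncomm_ring
      rw [this]; exact Submodule.add_mem _ ihx ihy
    | smul r x hx ih =>
      have : A * (r • x) - (r • x) * A = r • (A * x - x * A) := by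
        rw [mul_smul_comm, smul_mul_assoc, smul_sub]
      rw [this]; exact Submodule.smul_mem _ _ ih
  -- extend to all of mfr by linearity in A
  intro A hA B hB
  induction hA using Submodule.span_induction with
  | mem x hx => exact key2 x hx B hB
  | zero => simp
  | add x y hx hy ihx ihy =>
    have : (x + y) * B - B * (x + y) = (x * B - B * x) + (y * B - B * y) := by noncomm_ring
    rw [this]; exact Submodule.add_mem _ ihx ihy
  | smul r x hx ih =>
    have : (r • x) * B - B * (r • x) = r • (x * B - B * x) := by
      rw [mul_smul_comm, smul_mul_assoc, smul_sub]
    rw [this]; exact Submodule.smul_mem _ _ ih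
end

section
/- su(2^n) decomposes as the direct sum 𝔪 ⊕ 𝔩 as real vector spaces, where 𝔪 = span{a⊗σx, b⊗σy, i·x_n, i·y_n} and 𝔩 = span{c⊗σz, d⊗I, i·z_n} with a,b,c,d ranging over su(2^{n-1}). -/
open Matrix Complex
open scoped Kronecker

/-- Block extraction as an ℝ-linear map. -/
def blk (m : ℕ) (k l : Fin 2) :
    Matrix (Fin (2 ^ m) × Fin 2) (Fin (2 ^ m) × Fin 2) ℂ →ₗ[ℝ]
      Matrix (Fin (2 ^ m)) (Fin (2 ^ m)) ℂ where
  toFun A := Matrix.of fun i j => A (i, k) (j, l)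
  map_add' _ _ := rfl
  map_smul' _ _ := rfl

lemma blk_apply (m : ℕ) (k l : Fin 2)
    (A : Matrix (Fin (2 ^ m) × Fin 2) (Fin (2 ^ m) × Fin 2) ℂ) (i j : Fin (2 ^ m)) :
    blk m k l A i j = A (i, k) (j, l) := rfl

/-- Any skew-Hermitian `Q` (not necessarily traceless) gives `Q ⊗ₖ B` in the span,
provided `a ⊗ₖ B` (for `a ∈ su`) and `I • (1 ⊗ₖ B)` are among the generators. -/
lemma kron_mem_span {m : ℕ}
    (S : Set (Matrix (Fin (2 ^ m) × Fin 2) (Fin (2 ^ m) × Fin 2) ℂ))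
    (B : Matrix (Fin 2) (Fin 2) ℂ)
    (h1 : ∀ a ∈ su (Fin (2 ^ m)), a ⊗ₖ B ∈ S)
    (h2 : Complex.I • ((1 : Matrix (Fin (2 ^ m)) (Fin (2 ^ m)) ℂ) ⊗ₖ B) ∈ S)
    (Q : Matrix (Fin (2 ^ m)) (Fin (2 ^ m)) ℂ) (hQ : Qᴴ = -Q) :
    Q ⊗ₖ B ∈ Submodule.span ℝ S := by
  have hre : (Q.trace).re = 0 := by
    have h := congrArg Matrix.trace hQ
    rw [Matrix.trace_conjTranspose, Matrix.trace_neg] at h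
    have := congrArg Complex.re h
    simp at this
    linarith
  set t : ℝ := Q.trace.im / (2 ^ m) with ht
  set Q0 : Matrix (Fin (2 ^ m)) (Fin (2 ^ m)) ℂ := Q - ((t : ℂ) * Complex.I) • 1 with hQ0
  have hQ0skew : Q0ᴴ = -Q0 := by
    rw [hQ0, Matrix.conjTranspose_sub, Matrix.conjTranspose_smul, Matrix.conjTranspose_one, hQ]
    have : star ((t : ℂ) * Complex.I) = -((t : ℂ) * Complex.I) := by
      simp [Complex.ext_iff]
    rw [this]
    module
  have hQ0tr : Q0.trace = 0 := by
    rw [hQ0, Matrix.trace_sub, Matrix.trace_smul, Matrix.trace_one]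
    have hcard : (Fintype.card (Fin (2 ^ m)) : ℂ) = (2 : ℂ) ^ m := by
      simp
    rw [hcard, smul_eq_mul]
    have h2m : ((2 : ℝ) ^ m) ≠ 0 := by positivity
    have htr' : Q.trace = (Q.trace.im : ℂ) * Complex.I := by
      apply Complex.ext <;> simp [hre]
    have hkey : ((t : ℂ) * Complex.I) * (2 : ℂ) ^ m = Q.trace := by
      rw [htr', ht]
      push_cast
      field_simp
    rw [hkey, sub_self]
  have hsplit : Q ⊗ₖ B = Q0 ⊗ₖ B + t • (Complex.I • ((1 : Matrix (Fin (2 ^ m)) (Fin (2 ^ m)) ℂ) ⊗ₖ B)) := by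
    have : Q = Q0 + ((t : ℂ) * Complex.I) • 1 := by rw [hQ0]; abel
    rw [this, Matrix.add_kronecker, Matrix.smul_kronecker]
    congr 1
    rw [mul_smul, ← Complex.coe_algebraMap, algebraMap_smul]
  rw [hsplit]
  exact Submodule.add_mem _ (Submodule.subset_span (h1 Q0 ⟨hQ0skew, hQ0tr⟩))
    (Submodule.smul_mem _ t (Submodule.subset_span h2))

/-- su(2^n) = 𝔪 ⊕ 𝔩 as real vector spaces: every traceless skew-Hermitian
matrix is a sum of an element of 𝔪 and an element of 𝔩, and 𝔪 ∩ 𝔩 = {0}.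
Here n = m + 1. -/
theorem stmt3 (m : ℕ)
    (mfr lfr : Submodule ℝ (Matrix (Fin (2 ^ m) × Fin 2) (Fin (2 ^ m) × Fin 2) ℂ))
    (hm : mfr = Submodule.span ℝ
      {M | (∃ a ∈ su (Fin (2 ^ m)), M = a ⊗ₖ σx) ∨
           (∃ b ∈ su (Fin (2 ^ m)), M = b ⊗ₖ σy) ∨
           M = Complex.I • ((1 : Matrix (Fin (2 ^ m)) (Fin (2 ^ m)) ℂ) ⊗ₖ σx) ∨
           M = Complex.I • ((1 : Matrix (Fin (2 ^ m)) (Fin (2 ^ m)) ℂ) ⊗ₖ σy)})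
    (hl : lfr = Submodule.span ℝ
      {M | (∃ c ∈ su (Fin (2 ^ m)), M = c ⊗ₖ σz) ∨
           (∃ d ∈ su (Fin (2 ^ m)), M = d ⊗ₖ (1 : Matrix (Fin 2) (Fin 2) ℂ)) ∨
           M = Complex.I • ((1 : Matrix (Fin (2 ^ m)) (Fin (2 ^ m)) ℂ) ⊗ₖ σz)}) :
    (∀ A ∈ su (Fin (2 ^ m) × Fin 2), ∃ M ∈ mfr, ∃ L ∈ lfr, A = M + L) ∧
    (∀ A, A ∈ mfr → A ∈ lfr → A = 0) := by
  constructor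
  · -- decomposition
    rintro A ⟨hA, htr⟩
    have hstar : ∀ p q, (starRingEnd ℂ) (A q p) = -A p q := by
      intro p q
      have := congrFun (congrFun hA p) q
      simpa [Matrix.conjTranspose_apply] using this
    set P : Matrix (Fin (2 ^ m)) (Fin (2 ^ m)) ℂ :=
      Matrix.of fun i j => (A (i, 0) (j, 0) + A (i, 1) (j, 1)) / 2 with hPdef
    set Sm : Matrix (Fin (2 ^ m)) (Fin (2 ^ m)) ℂ :=
      Matrix.of fun i j => (A (i, 0) (j, 0) - A (i, 1) (j, 1)) / 2 with hSdef
    set Q : Matrix (Fin (2 ^ m)) (Fin (2 ^ m)) ℂ :=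
      Matrix.of fun i j => (A (i, 0) (j, 1) + A (i, 1) (j, 0)) / 2 with hQdef
    set R : Matrix (Fin (2 ^ m)) (Fin (2 ^ m)) ℂ :=
      Matrix.of fun i j => Complex.I * (A (i, 0) (j, 1) - A (i, 1) (j, 0)) / 2 with hRdef
    have hPs : Pᴴ = -P := by
      ext i j
      simp only [hPdef, Matrix.conjTranspose_apply, Matrix.of_apply, Matrix.neg_apply,
        Complex.star_def, map_div₀, map_add, map_ofNat, hstar]
      ring
    have hSs : Smᴴ = -Sm := by
      ext i j
      simp only [hSdef, Matrix.conjTranspose_apply, Matrix.of_apply, Matrix.neg_apply,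
        Complex.star_def, map_div₀, map_sub, map_ofNat, hstar]
      ring
    have hQs : Qᴴ = -Q := by
      ext i j
      simp only [hQdef, Matrix.conjTranspose_apply, Matrix.of_apply, Matrix.neg_apply,
        Complex.star_def, map_div₀, map_add, map_ofNat, hstar]
      ring
    have hRs : Rᴴ = -R := by
      ext i j
      simp only [hRdef, Matrix.conjTranspose_apply, Matrix.of_apply, Matrix.neg_apply,
        Complex.star_def, map_div₀, map_sub, _root_.map_mul, map_ofNat, Complex.conj_I, hstar]
      ring
    have htrA : ∑ i, (A (i, 0) (i, 0) + A (i, 1) (i, 1)) = 0 := by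
      rw [Matrix.trace, Fintype.sum_prod_type] at htr
      simpa [Matrix.diag, Fin.sum_univ_two] using htr
    have hPtr : P.trace = 0 := by
      simp only [Matrix.trace, Matrix.diag, hPdef, Matrix.of_apply]
      rw [← Finset.sum_div, htrA]
      simp
    have hdec : A = (Q ⊗ₖ σx + R ⊗ₖ σy) +
        (P ⊗ₖ (1 : Matrix (Fin 2) (Fin 2) ℂ) + Sm ⊗ₖ σz) := by
      ext ⟨i, k⟩ ⟨j, l⟩
      fin_cases k <;> fin_cases l <;>
        simp [σx, σy, σz, Matrix.kroneckerMap_apply, Matrix.one_apply, hPdef, hSdef,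
          hQdef, hRdef] <;> ring_nf <;> try simp only [Complex.I_sq] <;> ring_nf
    refine ⟨Q ⊗ₖ σx + R ⊗ₖ σy, ?_, P ⊗ₖ (1 : Matrix (Fin 2) (Fin 2) ℂ) + Sm ⊗ₖ σz, ?_, hdec⟩
    · rw [hm]
      refine Submodule.add_mem _ ?_ ?_
      · exact kron_mem_span _ σx (fun a ha => Or.inl ⟨a, ha, rfl⟩)
          (Or.inr (Or.inr (Or.inl rfl))) Q hQs
      · exact kron_mem_span _ σy (fun b hb => Or.inr (Or.inl ⟨b, hb, rfl⟩))
          (Or.inr (Or.inr (Or.inr rfl))) R hRs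
    · rw [hl]
      refine Submodule.add_mem _ ?_ ?_
      · exact Submodule.subset_span (Or.inr (Or.inl ⟨P, ⟨hPs, hPtr⟩, rfl⟩))
      · exact kron_mem_span _ σz (fun c hc => Or.inl ⟨c, hc, rfl⟩)
          (Or.inr (Or.inr rfl)) Sm hSs
  · -- intersection is trivial
    intro A hAm hAl
    have hmker : mfr ≤ LinearMap.ker (blk m 0 0) ⊓ LinearMap.ker (blk m 1 1) := by
      rw [hm, Submodule.span_le]
      rintro M (⟨a, _, rfl⟩ | ⟨b, _, rfl⟩ | rfl | rfl) <;>
        refine ⟨?_, ?_⟩ <;>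
          (rw [SetLike.mem_coe, LinearMap.mem_ker]; ext i j;
            simp [blk_apply, σx, σy, Matrix.kroneckerMap_apply])
    have hlker : lfr ≤ LinearMap.ker (blk m 0 1) ⊓ LinearMap.ker (blk m 1 0) := by
      rw [hl, Submodule.span_le]
      rintro M (⟨c, _, rfl⟩ | ⟨d, _, rfl⟩ | rfl) <;>
        refine ⟨?_, ?_⟩ <;>
          (rw [SetLike.mem_coe, LinearMap.mem_ker]; ext i j;
            simp [blk_apply, σz, Matrix.kroneckerMap_apply, Matrix.one_apply])
    have h00 : (blk m 0 0) A = 0 := (hmker hAm).1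
    have h11 : (blk m 1 1) A = 0 := (hmker hAm).2
    have h01 : (blk m 0 1) A = 0 := (hlker hAl).1
    have h10 : (blk m 1 0) A = 0 := (hlker hAl).2
    have e00 : ∀ i j, A (i, 0) (j, 0) = 0 := fun i j => by
      have := congrFun (congrFun h00 i) j; simpa [blk_apply] using this
    have e11 : ∀ i j, A (i, 1) (j, 1) = 0 := fun i j => by
      have := congrFun (congrFun h11 i) j; simpa [blk_apply] using this
    have e01 : ∀ i j, A (i, 0) (j, 1) = 0 := fun i j => by
      have := congrFun (congrFun h01 i) j; simpa [blk_apply] using this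
    have e10 : ∀ i j, A (i, 1) (j, 0) = 0 := fun i j => by
      have := congrFun (congrFun h10 i) j; simpa [blk_apply] using this
    ext ⟨i, k⟩ ⟨j, l⟩
    fin_cases k <;> fin_cases l <;> simp [e00, e01, e10, e11]
end

section
/- For real parameters a, b: exp(i(a·σx⊗σx + b·σy⊗σy)) is, after conjugation by CNOT (with control qubit 2, target qubit 1), equal to the block-diagonal matrix diag(p₋, p₊), where p∓ is the 2×2 matrix with diagonal entries cos(a∓b) and off-diagonal entries i·sin(a∓b). -/
open Matrix Complex
open scoped Kronecker

set_option maxHeartbeats 1000000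

/-- CNOT with control on qubit 2 and target on qubit 1: |q₁q₂⟩ ↦ |q₁⊕q₂, q₂⟩. -/
noncomputable def CNOT21 : Matrix (Fin 2 × Fin 2) (Fin 2 × Fin 2) ℂ :=
  fun p q => if p = (q.1 + q.2, q.2) then 1 else 0

/-! ### Auxiliary machinery -/

/-- Explicit form of the Hamiltonian `i(a σx⊗σx + b σy⊗σy)`. -/
noncomputable def Mex (a b : ℝ) : Matrix (Fin 2 × Fin 2) (Fin 2 × Fin 2) ℂ :=
  fun p q =>
    if p.1 ≠ q.1 ∧ p.2 ≠ q.2 then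
      (if p.2 = p.1 then I * ((a-b : ℝ) : ℂ) else I * ((a+b : ℝ) : ℂ))
    else 0

/-- Explicit form after CNOT conjugation: block diagonal. -/
noncomputable def Kex (a b : ℝ) : Matrix (Fin 2 × Fin 2) (Fin 2 × Fin 2) ℂ :=
  fun p q =>
    if p.1 = q.1 ∧ p.2 ≠ q.2 then
      (if p.1 = 0 then I * ((a-b : ℝ) : ℂ) else I * ((a+b : ℝ) : ℂ))
    else 0

/-- Block-diagonal Hadamard-type involution diagonalizing `Kex`. -/
noncomputable def W4 : Matrix (Fin 2 × Fin 2) (Fin 2 × Fin 2) ℂ :=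
  fun p q => if p.1 = q.1 then ((Real.sqrt 2 : ℂ))⁻¹ * (if p.2 = 1 ∧ q.2 = 1 then -1 else 1) else 0

/-- Eigenvalues. -/
noncomputable def dvec (a b : ℝ) : Fin 2 × Fin 2 → ℂ :=
  fun k => if k.1 = 0 then (if k.2 = 0 then I * ((a-b : ℝ) : ℂ) else -(I * ((a-b : ℝ) : ℂ)))
           else (if k.2 = 0 then I * ((a+b : ℝ) : ℂ) else -(I * ((a+b : ℝ) : ℂ)))

lemma hs2 : ((Real.sqrt 2 : ℝ) : ℂ) * ((Real.sqrt 2 : ℝ) : ℂ) = 2 := by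
  norm_cast
  exact Real.mul_self_sqrt (by norm_num)

lemma hinv : (((Real.sqrt 2 : ℝ) : ℂ))⁻¹ * (((Real.sqrt 2 : ℝ) : ℂ))⁻¹ = 1/2 := by
  rw [← mul_inv, hs2]; norm_num

lemma hinv2 : (((Real.sqrt 2 : ℝ) : ℂ))⁻¹ ^ 2 = 1/2 := by
  rw [sq]; exact hinv

lemma hCC : CNOT21 * CNOT21 = 1 := by
  ext ⟨p1, p2⟩ ⟨q1, q2⟩
  fin_cases p1 <;> fin_cases p2 <;> fin_cases q1 <;> fin_cases q2 <;>
    simp [CNOT21, Matrix.mul_apply, Fintype.sum_prod_type, Fin.sum_univ_two,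
      Matrix.one_apply, Prod.ext_iff]

lemma hWW : W4 * W4 = 1 := by
  ext ⟨p1, p2⟩ ⟨q1, q2⟩
  fin_cases p1 <;> fin_cases p2 <;> fin_cases q1 <;> fin_cases q2 <;>
    simp [W4, Matrix.mul_apply, Fintype.sum_prod_type, Fin.sum_univ_two,
      Matrix.one_apply, Prod.ext_iff] <;>
    field_simp <;> simp only [sq, hs2] <;> ring

lemma hMex (a b : ℝ) :
    (Complex.I • ((a:ℂ) • (σx ⊗ₖ σx) + (b:ℂ) • (σy ⊗ₖ σy))) = Mex a b := by
  ext ⟨p1, p2⟩ ⟨q1, q2⟩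
  fin_cases p1 <;> fin_cases p2 <;> fin_cases q1 <;> fin_cases q2 <;>
    simp [Mex, σx, σy] <;> push_cast <;> ring

lemma hKex (a b : ℝ) : CNOT21 * Mex a b * CNOT21 = Kex a b := by
  ext ⟨p1, p2⟩ ⟨q1, q2⟩
  fin_cases p1 <;> fin_cases p2 <;> fin_cases q1 <;> fin_cases q2 <;>
    simp [CNOT21, Mex, Kex, Matrix.mul_apply, Fintype.sum_prod_type, Fin.sum_univ_two,
      Prod.ext_iff]

lemma hKW (a b : ℝ) : Kex a b = W4 * diagonal (dvec a b) * W4 := by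
  ext ⟨p1, p2⟩ ⟨q1, q2⟩
  fin_cases p1 <;> fin_cases p2 <;> fin_cases q1 <;> fin_cases q2 <;>
    simp [Kex, W4, dvec, Matrix.mul_apply, Matrix.diagonal_apply,
      Fintype.sum_prod_type, Fin.sum_univ_two, Prod.ext_iff] <;>
    push_cast <;> ring_nf <;> simp only [hinv2] <;> first | rfl | ring

lemma hcos (c : ℝ) : Complex.exp (I * c) + Complex.exp (-(I * c)) = 2 * Real.cos c := by
  rw [mul_comm I (c:ℂ), ← neg_mul, Complex.exp_mul_I, Complex.exp_mul_I,
    Complex.cos_neg, Complex.sin_neg, ← Complex.ofReal_cos, ← Complex.ofReal_sin]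
  ring

lemma hsin (c : ℝ) : Complex.exp (I * c) - Complex.exp (-(I * c)) = 2 * I * Real.sin c := by
  rw [mul_comm I (c:ℂ), ← neg_mul, Complex.exp_mul_I, Complex.exp_mul_I,
    Complex.cos_neg, Complex.sin_neg, ← Complex.ofReal_cos, ← Complex.ofReal_sin]
  ring

lemma hfinal (a b : ℝ)
    (pminus pplus : Matrix (Fin 2) (Fin 2) ℂ)
    (hm : pminus = !![(Real.cos (a - b) : ℂ), Complex.I * Real.sin (a - b);
                      Complex.I * Real.sin (a - b), (Real.cos (a - b) : ℂ)])
    (hp : pplus = !![(Real.cos (a + b) : ℂ), Complex.I * Real.sin (a + b);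
                     Complex.I * Real.sin (a + b), (Real.cos (a + b) : ℂ)]) :
    W4 * diagonal (fun k => Complex.exp (dvec a b k)) * W4 =
      (fun p q => if p.1 = q.1 then (if p.1 = 0 then pminus else pplus) p.2 q.2 else 0 :
        Matrix (Fin 2 × Fin 2) (Fin 2 × Fin 2) ℂ) := by
  have h1 := hcos (a - b)
  have h2 := hcos (a + b)
  have h3 := hsin (a - b)
  have h4 := hsin (a + b)
  push_cast at h1 h2 h3 h4
  ext ⟨p1, p2⟩ ⟨q1, q2⟩
  fin_cases p1 <;> fin_cases p2 <;> fin_cases q1 <;> fin_cases q2 <;>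
    simp [W4, dvec, hm, hp, Matrix.mul_apply, Matrix.diagonal_apply,
      Fintype.sum_prod_type, Fin.sum_univ_two, Prod.ext_iff] <;>
    push_cast <;>
    first
      | linear_combination ((((Real.sqrt 2:ℝ):ℂ))⁻¹^2) * h1 + 2 * Complex.cos ((a:ℂ)-b) * hinv2
      | linear_combination ((((Real.sqrt 2:ℝ):ℂ))⁻¹^2) * h2 + 2 * Complex.cos ((a:ℂ)+b) * hinv2
      | linear_combination ((((Real.sqrt 2:ℝ):ℂ))⁻¹^2) * h3 + 2 * I * Complex.sin ((a:ℂ)-b) * hinv2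
      | linear_combination ((((Real.sqrt 2:ℝ):ℂ))⁻¹^2) * h4 + 2 * I * Complex.sin ((a:ℂ)+b) * hinv2
      | linear_combination (-(((Real.sqrt 2:ℝ):ℂ))⁻¹^2) * h3 - 2 * I * Complex.sin ((a:ℂ)-b) * hinv2
      | linear_combination (-(((Real.sqrt 2:ℝ):ℂ))⁻¹^2) * h4 - 2 * I * Complex.sin ((a:ℂ)+b) * hinv2
      | ring

/-- The conjugating matrix `CNOT21 * W4` as a unit. -/
noncomputable def uCW : (Matrix (Fin 2 × Fin 2) (Fin 2 × Fin 2) ℂ)ˣ where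
  val := CNOT21 * W4
  inv := W4 * CNOT21
  val_inv := by rw [mul_assoc, ← mul_assoc W4, hWW, one_mul, hCC]
  inv_val := by rw [mul_assoc, ← mul_assoc CNOT21 CNOT21, hCC, one_mul, hWW]

/-- Conjugating exp(i(a·σx⊗σx + b·σy⊗σy)) by CNOT (control qubit 2, target
qubit 1) yields the block-diagonal matrix diag(p₋, p₊) with
p∓ = [[cos(a∓b), i sin(a∓b)], [i sin(a∓b), cos(a∓b)]]. -/
theorem stmt7 (a b : ℝ)
    (pminus pplus : Matrix (Fin 2) (Fin 2) ℂ)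
    (hm : pminus = !![(Real.cos (a - b) : ℂ), Complex.I * Real.sin (a - b);
                      Complex.I * Real.sin (a - b), (Real.cos (a - b) : ℂ)])
    (hp : pplus = !![(Real.cos (a + b) : ℂ), Complex.I * Real.sin (a + b);
                     Complex.I * Real.sin (a + b), (Real.cos (a + b) : ℂ)]) :
    CNOT21 * NormedSpace.exp
        (Complex.I • ((a : ℂ) • (σx ⊗ₖ σx) + (b : ℂ) • (σy ⊗ₖ σy))) * CNOT21 =
      fun p q => if p.1 = q.1 then (if p.1 = 0 then pminus else pplus) p.2 q.2
                 else 0 := by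
  have hM : Complex.I • ((a : ℂ) • (σx ⊗ₖ σx) + (b : ℂ) • (σy ⊗ₖ σy)) =
      (CNOT21 * W4) * diagonal (dvec a b) * (W4 * CNOT21) := by
    have h1 : CNOT21 * (CNOT21 * Mex a b * CNOT21) * CNOT21 = Mex a b := by
      rw [show CNOT21 * (CNOT21 * Mex a b * CNOT21) * CNOT21 =
        (CNOT21 * CNOT21) * Mex a b * (CNOT21 * CNOT21) by noncomm_ring, hCC, one_mul, mul_one]
    rw [hMex a b, ← h1, hKex a b, hKW a b]
    noncomm_ring
  rw [hM]
  have hconj := Matrix.exp_units_conj uCW (diagonal (dvec a b))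
  have hval : (uCW : Matrix (Fin 2 × Fin 2) (Fin 2 × Fin 2) ℂ) = CNOT21 * W4 := rfl
  have hival : ((uCW⁻¹ : (Matrix (Fin 2 × Fin 2) (Fin 2 × Fin 2) ℂ)ˣ) :
      Matrix (Fin 2 × Fin 2) (Fin 2 × Fin 2) ℂ) = W4 * CNOT21 := rfl
  rw [hval, hival] at hconj
  rw [hconj, Matrix.exp_diagonal]
  have hd : NormedSpace.exp (dvec a b) = fun k => Complex.exp (dvec a b k) := by
    funext k
    rw [Pi.coe_exp, ← Complex.exp_eq_exp_ℂ]
  rw [hd]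
  have hre : CNOT21 * (CNOT21 * W4 * diagonal (fun k => Complex.exp (dvec a b k)) *
      (W4 * CNOT21)) * CNOT21 =
      W4 * diagonal (fun k => Complex.exp (dvec a b k)) * W4 := by
    rw [show CNOT21 * (CNOT21 * W4 * diagonal (fun k => Complex.exp (dvec a b k)) *
      (W4 * CNOT21)) * CNOT21 = (CNOT21 * CNOT21) * (W4 *
      diagonal (fun k => Complex.exp (dvec a b k)) * W4) * (CNOT21 * CNOT21) by noncomm_ring,
      hCC, one_mul, mul_one]
  rw [hre, hfinal a b pminus pplus hm hp]
end

section
/- For all n ≥ 2, (21/16)·4^n − 3·(n·2^{n−2} + 2^n) ≥ (1/4)·(4^n − 3n − 1); i.e. the Khaneja–Glaser CNOT count dominates the theoretical lower bound. -/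
/-- For all n ≥ 2, the Khaneja–Glaser CNOT count (21/16)·4^n − 3·(n·2^{n−2} + 2^n)
dominates the theoretical lower bound (1/4)·(4^n − 3n − 1). -/
theorem stmt15 (n : ℕ) (hn : 2 ≤ n) :
    ((21 : ℝ) / 16) * 4 ^ n - 3 * ((n : ℝ) * 2 ^ (n - 2) + 2 ^ n) ≥
      (1 / 4 : ℝ) * (4 ^ n - 3 * (n : ℝ) - 1) := by
  obtain ⟨m, rfl⟩ : ∃ m, n = m + 2 := ⟨n - 2, (Nat.sub_add_cancel hn).symm⟩
  have h4 : (4 : ℝ) ^ (m + 2) = 16 * ((2:ℝ)^m)^2 := by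
    rw [show (4:ℝ) = 2^2 by norm_num, ← pow_mul]; ring_nf
  have h2 : (2 : ℝ) ^ (m + 2) = 4 * (2:ℝ)^m := by ring
  have hx1 : (1:ℝ) ≤ (2:ℝ)^m := one_le_pow₀ (by norm_num)
  have hm : (m:ℝ) + 1 ≤ (2:ℝ)^m := by
    have h := Nat.lt_two_pow_self (n := m)
    exact_mod_cast Nat.succ_le_of_lt h
  simp only [Nat.add_sub_cancel]
  push_cast
  rw [h4, h2]
  nlinarith [sq_nonneg ((2:ℝ)^m - 1), sq_nonneg ((2:ℝ)^m - (m:ℝ) - 1), mul_nonneg (sub_nonneg.2 hm) (sub_nonneg.2 hx1)]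
end
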